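/- The set M_{t_j} = { x ∈ ℝ⁴ : x₁x₂ + βx₃x₄ = 0 and q_{t_j}(x) ≠ 0 } is a group under the generalized bicomplex product: it contains the identity e = (1,0,0,0), it is closed under the product, and every x ∈ M_{t_j} has inverse x⁻¹ = (1/q_{t_j}(x))·(x₁, x₂, −x₃, −x₄), which again lies in M_{t_j}. -/

import Mathlib

/-- The generalized bicomplex product on ℝ⁴ with parameters α, β. -/
def gbmul (α β : ℝ) (x y : ℝ × ℝ × ℝ × ℝ) : ℝ × ℝ × ℝ × ℝ :=
  (x.1 * y.1 - α * x.2.1 * y.2.1 - β * x.2.2.1 * y.2.2.1 + α * β * x.2.2.2 * y.2.2.2,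
   x.1 * y.2.1 + x.2.1 * y.1 - β * x.2.2.1 * y.2.2.2 - β * x.2.2.2 * y.2.2.1,
   x.1 * y.2.2.1 + x.2.2.1 * y.1 - α * x.2.1 * y.2.2.2 - α * x.2.2.2 * y.2.1,
   x.1 * y.2.2.2 + x.2.2.2 * y.1 + x.2.1 * y.2.2.1 + x.2.2.1 * y.2.1)

/-- The quadratic form associated with the conjugation. -/
def qTj (α β : ℝ) (x : ℝ × ℝ × ℝ × ℝ) : ℝ := x.1 ^ 2 - α * x.2.1 ^ 2 + β * x.2.2.1 ^ 2 - α * β * x.2.2.2 ^ 2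

/-!
Write `c(x) = x₁x₂ + βx₃x₄` and `x̄ = (x₁, x₂, -x₃, -x₄)` (the conjugation `t_j`). Two polynomial
identities drive everything: `c(xy) = q(y) c(x) + q(x) c(y)` and
`q(xy) = q(x) q(y) - 4α c(x) c(y)`, so on `{c = 0}` the form `q` is multiplicative and
`{c = 0, q ≠ 0}` is closed under the product. Moreover `x x̄ = (q(x), 2c(x), 0, 0)`, which is
`q(x) e` on the hyperquadric, so `q(x)⁻¹ x̄` is the inverse; the product is commutative, so it is
two-sided.
-/

def gbconj (x : ℝ × ℝ × ℝ × ℝ) : ℝ × ℝ × ℝ × ℝ := (x.1, x.2.1, -x.2.2.1, -x.2.2.2)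

def hyperForm (β : ℝ) (x : ℝ × ℝ × ℝ × ℝ) : ℝ := x.1 * x.2.1 + β * x.2.2.1 * x.2.2.2

def hyperquadric (α β : ℝ) : Set (ℝ × ℝ × ℝ × ℝ) := {x | hyperForm β x = 0 ∧ qTj α β x ≠ 0}

section

variable {α β : ℝ}

theorem gbmul_comm (x y : ℝ × ℝ × ℝ × ℝ) : gbmul α β x y = gbmul α β y x := by
  simp only [gbmul, Prod.mk.injEq]
  refine ⟨?_, ?_, ?_, ?_⟩ <;> ring

theorem gbmul_smul_right (r : ℝ) (x y : ℝ × ℝ × ℝ × ℝ) :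
    gbmul α β x (r • y) = r • gbmul α β x y := by
  simp only [gbmul, Prod.smul_mk, Prod.smul_fst, Prod.smul_snd, smul_eq_mul, Prod.mk.injEq]
  refine ⟨?_, ?_, ?_, ?_⟩ <;> ring

theorem gbmul_gbconj_self (x : ℝ × ℝ × ℝ × ℝ) :
    gbmul α β x (gbconj x) = (qTj α β x, 2 * hyperForm β x, 0, 0) := by
  simp only [gbmul, gbconj, qTj, hyperForm, Prod.mk.injEq]
  refine ⟨?_, ?_, ?_, ?_⟩ <;> ring

theorem hyperForm_gbmul (x y : ℝ × ℝ × ℝ × ℝ) :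
    hyperForm β (gbmul α β x y) = qTj α β y * hyperForm β x + qTj α β x * hyperForm β y := by
  simp only [hyperForm, gbmul, qTj]
  ring

theorem qTj_gbmul (x y : ℝ × ℝ × ℝ × ℝ) :
    qTj α β (gbmul α β x y) = qTj α β x * qTj α β y - 4 * α * hyperForm β x * hyperForm β y := by
  simp only [qTj, gbmul, hyperForm]
  ring

theorem hyperForm_smul (r : ℝ) (x : ℝ × ℝ × ℝ × ℝ) : hyperForm β (r • x) = r ^ 2 * hyperForm β x := by
  simp only [hyperForm, Prod.smul_fst, Prod.smul_snd, smul_eq_mul]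
  ring

theorem qTj_smul (r : ℝ) (x : ℝ × ℝ × ℝ × ℝ) : qTj α β (r • x) = r ^ 2 * qTj α β x := by
  simp only [qTj, Prod.smul_fst, Prod.smul_snd, smul_eq_mul]
  ring

theorem hyperForm_gbconj (x : ℝ × ℝ × ℝ × ℝ) : hyperForm β (gbconj x) = hyperForm β x := by
  simp only [hyperForm, gbconj]
  ring

theorem qTj_gbconj (x : ℝ × ℝ × ℝ × ℝ) : qTj α β (gbconj x) = qTj α β x := by
  simp only [qTj, gbconj]
  ring

theorem one_mem_hyperquadric : ((1, 0, 0, 0) : ℝ × ℝ × ℝ × ℝ) ∈ hyperquadric α β := by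
  simp [hyperquadric, hyperForm, qTj]

theorem gbmul_mem_hyperquadric {x y : ℝ × ℝ × ℝ × ℝ} (hx : x ∈ hyperquadric α β)
    (hy : y ∈ hyperquadric α β) : gbmul α β x y ∈ hyperquadric α β := by
  refine ⟨?_, ?_⟩
  · rw [hyperForm_gbmul, hx.1, hy.1]
    ring
  · rw [qTj_gbmul, hx.1]
    simpa using mul_ne_zero hx.2 hy.2

theorem inv_smul_gbconj_mem_hyperquadric {x : ℝ × ℝ × ℝ × ℝ} (hx : x ∈ hyperquadric α β) :
    (qTj α β x)⁻¹ • gbconj x ∈ hyperquadric α β := by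
  refine ⟨?_, ?_⟩
  · rw [hyperForm_smul, hyperForm_gbconj, hx.1, mul_zero]
  · rw [qTj_smul, qTj_gbconj]
    exact mul_ne_zero (pow_ne_zero 2 (inv_ne_zero hx.2)) hx.2

theorem gbmul_inv_smul_gbconj {x : ℝ × ℝ × ℝ × ℝ} (hx : x ∈ hyperquadric α β) :
    gbmul α β x ((qTj α β x)⁻¹ • gbconj x) = (1, 0, 0, 0) := by
  rw [gbmul_smul_right, gbmul_gbconj_self, hx.1]
  simp [hx.2]

end

/-- The hyperquadric is a group under the generalized bicomplex product: it
contains the identity `(1,0,0,0)`, is closed under the product, and every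
element has a two-sided inverse (again lying in the hyperquadric) given by the
scaled conjugate. -/
theorem hyperquadric_group (α β : ℝ) :
    let M : Set (ℝ × ℝ × ℝ × ℝ) :=
      {x | x.1 * x.2.1 + β * x.2.2.1 * x.2.2.2 = 0 ∧ qTj α β x ≠ 0}
    let e : ℝ × ℝ × ℝ × ℝ := (1, 0, 0, 0)
    e ∈ M ∧
    (∀ x ∈ M, ∀ y ∈ M, gbmul α β x y ∈ M) ∧
    (∀ x ∈ M,
      ((qTj α β x)⁻¹ • ((x.1, x.2.1, -x.2.2.1, -x.2.2.2) : ℝ × ℝ × ℝ × ℝ)) ∈ M ∧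
      gbmul α β x ((qTj α β x)⁻¹ • ((x.1, x.2.1, -x.2.2.1, -x.2.2.2) : ℝ × ℝ × ℝ × ℝ)) = e ∧
      gbmul α β ((qTj α β x)⁻¹ • ((x.1, x.2.1, -x.2.2.1, -x.2.2.2) : ℝ × ℝ × ℝ × ℝ)) x = e) := by
  intro M e
  refine ⟨one_mem_hyperquadric, fun x hx y hy => gbmul_mem_hyperquadric hx hy, fun x hx => ?_⟩
  exact ⟨inv_smul_gbconj_mem_hyperquadric hx, gbmul_inv_smul_gbconj hx,
    (gbmul_comm _ _).trans (gbmul_inv_smul_gbconj hx)⟩
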